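/- Let (M,c,D) be a four-dimensional Weyl space with Ricci tensor Ric, F a foliation by null geodesics such that F^⊥ is integrable, and {U, Ũ, Y, Ỹ} a local frame with Y a section of F, D_Y Y = 0, and g = 2(U⊙Ũ + Y⊙Ỹ) a local representative of c. Then Ric(Y,Y) = 2[ Y(g(D_U Ũ, Y)) − g(D_U Ũ, Y)² − g([U,Y],U) · g([Ũ,Y],Ũ) ]. -/

import Mathlib

noncomputable section
open scoped BigOperators

/-- Points of the model chart `ℝ^n`. -/
abbrev Pt (n : ℕ) := EuclideanSpace ℝ (Fin n)
/-- A linear connection, given by its Christoffel tensor relative to the flat chart. -/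
abbrev Conn (n : ℕ) := Pt n → Pt n →ₗ[ℝ] Pt n →ₗ[ℝ] Pt n
/-- A (pseudo-Riemannian) metric on the chart. -/
abbrev Met (n : ℕ) := Pt n → Pt n →ₗ[ℝ] Pt n →ₗ[ℝ] ℝ

def TorsionFree {n : ℕ} (Γ : Conn n) : Prop := ∀ x u v, Γ x u v = Γ x v u
def MetSymm {n : ℕ} (g : Met n) : Prop := ∀ x u v, g x u v = g x v u
def MetPos {n : ℕ} (g : Met n) : Prop := ∀ x v, v ≠ 0 → 0 < g x v v
/-- The covariant derivative `(D_u g)(v, w)` of the metric. -/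
def covMet {n : ℕ} (g : Met n) (Γ : Conn n) (x u v w : Pt n) : ℝ :=
  fderiv ℝ (fun p => g p v w) x u - g x (Γ x u v) w - g x v (Γ x u w)
/-- Levi-Civita connection: torsion-free and metric. -/
def IsLeviCivita {n : ℕ} (g : Met n) (Γ : Conn n) : Prop :=
  TorsionFree Γ ∧ ∀ x u v w, covMet g Γ x u v w = 0
/-- Weyl connection for the conformal class of `g`, with Lee form `α` w.r.t. `g`:
`D g = -2 α ⊗ g`. -/
def IsWeyl {n : ℕ} (g : Met n) (Γ : Conn n) (α : Pt n → Pt n → ℝ) : Prop :=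
  TorsionFree Γ ∧ ∀ x u v w, covMet g Γ x u v w = -2 * α x u * g x v w
/-- Covariant derivative `D_X Y` of vector fields. -/
def covVF {n : ℕ} (Γ : Conn n) (X Y : Pt n → Pt n) : Pt n → Pt n :=
  fun x => fderiv ℝ Y x (X x) + Γ x (X x) (Y x)
/-- The Hessian `(D df)(u, v)` of a function w.r.t. a connection. -/
def hessian {n : ℕ} (Γ : Conn n) (f : Pt n → ℝ) (x u v : Pt n) : ℝ :=
  fderiv ℝ (fun p => fderiv ℝ f p v) x u - fderiv ℝ f x (Γ x u v)
/-- A `g`-orthonormal frame. -/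
def OrthFrame {n : ℕ} (g : Met n) (e : Fin n → Pt n → Pt n) : Prop :=
  ∀ x i j, g x (e i x) (e j x) = if i = j then (1 : ℝ) else 0
/-- The Lie bracket of vector fields. -/
def lieB {n : ℕ} (X Y : Pt n → Pt n) : Pt n → Pt n :=
  fun x => fderiv ℝ Y x (X x) - fderiv ℝ X x (Y x)
/-- The Laplacian `tr_g (D df)` computed in the `g`-orthonormal frame `e`. -/
def lap {n : ℕ} (Γ : Conn n) (e : Fin n → Pt n → Pt n) (f : Pt n → ℝ) (x : Pt n) : ℝ :=
  ∑ i, hessian Γ f x (e i x) (e i x)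
/-- The second fundamental form `(D dφ)(u, v)` of a map `φ`. -/
def sff {m n : ℕ} (ΓM : Conn m) (ΓN : Conn n) (φ : Pt m → Pt n) (x u v : Pt m) : Pt n :=
  fderiv ℝ (fun p => fderiv ℝ φ p v) x u
    + ΓN (φ x) (fderiv ℝ φ x u) (fderiv ℝ φ x v)
    - fderiv ℝ φ x (ΓM x u v)
/-- The tension field `tr_g (D dφ)` computed in the `g`-orthonormal frame `e`. -/
def tension {m n : ℕ} (ΓM : Conn m) (ΓN : Conn n) (φ : Pt m → Pt n)
    (e : Fin m → Pt m → Pt m) (x : Pt m) : Pt n :=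
  ∑ i, sff ΓM ΓN φ x (e i x) (e i x)
/-- The curvature `R(u, v)w` of a connection. -/
def curv {n : ℕ} (Γ : Conn n) (x u v w : Pt n) : Pt n :=
  fderiv ℝ (fun p => Γ p v w) x u - fderiv ℝ (fun p => Γ p u w) x v
    + Γ x u (Γ x v w) - Γ x v (Γ x u w)
/-- The Ricci tensor `Ric(v, w) = tr (u ↦ R(u, v) w)`. -/
def ricci {n : ℕ} (Γ : Conn n) (x v w : Pt n) : ℝ :=
  ∑ i, (inner ℝ (curv Γ x (EuclideanSpace.single i 1) v w)
    (EuclideanSpace.single i (1 : ℝ)) : ℝ)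
/-- Orthogonal projection onto the span of the (orthonormal) partial frame `v`. -/
def projF {m r : ℕ} (g : Met m) (v : Fin r → Pt m → Pt m) (x u : Pt m) : Pt m :=
  ∑ i, g x u (v i x) • v i x
/-- The covariant derivative `(D_u J)(v)` of an endomorphism field. -/
def DJof {n : ℕ} (Γ : Conn n) (J : Pt n → Pt n →ₗ[ℝ] Pt n) (x u v : Pt n) : Pt n :=
  fderiv ℝ (fun p => J p v) x u + Γ x u (J x v) - J x (Γ x u v)


namespace S18


variable {n : ℕ} {F : Type*} [NormedAddCommGroup F] [NormedSpace ℝ F]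

/-- Upgrade a pointwise bilinear field to continuous linear maps. -/
def T2 (T : Pt n → Pt n →ₗ[ℝ] Pt n →ₗ[ℝ] F) : Pt n → Pt n →L[ℝ] Pt n →L[ℝ] F :=
  fun p => LinearMap.toContinuousLinearMap
    (((LinearMap.toContinuousLinearMap :
        (Pt n →ₗ[ℝ] F) ≃ₗ[ℝ] (Pt n →L[ℝ] F)).toLinearMap).comp (T p))

@[simp] lemma T2_apply (T : Pt n → Pt n →ₗ[ℝ] Pt n →ₗ[ℝ] F) (p v w : Pt n) :
    T2 T p v w = T p v w := by
  simp [T2]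

lemma T2_contDiff {T : Pt n → Pt n →ₗ[ℝ] Pt n →ₗ[ℝ] F}
    (hT : ∀ v w, ContDiff ℝ (⊤ : ℕ∞) fun p => T p v w) :
    ContDiff ℝ (⊤ : ℕ∞) (T2 T) := by
  rw [contDiff_clm_apply_iff]
  intro v
  rw [contDiff_clm_apply_iff]
  intro w
  simpa using hT v w

lemma bilin_contDiff {T : Pt n → Pt n →ₗ[ℝ] Pt n →ₗ[ℝ] F}
    (hT : ∀ v w, ContDiff ℝ (⊤ : ℕ∞) fun p => T p v w)
    {V W : Pt n → Pt n} (hV : ContDiff ℝ (⊤ : ℕ∞) V) (hW : ContDiff ℝ (⊤ : ℕ∞) W) :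
    ContDiff ℝ (⊤ : ℕ∞) fun p => T p (V p) (W p) := by
  have h := ((T2_contDiff hT).clm_apply hV).clm_apply hW
  simpa using h

lemma fderiv_bilin {T : Pt n → Pt n →ₗ[ℝ] Pt n →ₗ[ℝ] F}
    (hT : ∀ v w, ContDiff ℝ (⊤ : ℕ∞) fun p => T p v w)
    {V W : Pt n → Pt n} (hV : ContDiff ℝ (⊤ : ℕ∞) V) (hW : ContDiff ℝ (⊤ : ℕ∞) W) (x u : Pt n) :
    fderiv ℝ (fun p => T p (V p) (W p)) x u
      = fderiv ℝ (fun p => T p (V x) (W x)) x u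
        + T x (fderiv ℝ V x u) (W x) + T x (V x) (fderiv ℝ W x u) := by
  have hC : ContDiff ℝ (⊤ : ℕ∞) (T2 T) := T2_contDiff hT
  have hCd : DifferentiableAt ℝ (T2 T) x := (hC.differentiable (by simp)) x
  have hVd : DifferentiableAt ℝ V x := (hV.differentiable (by simp)) x
  have hWd : DifferentiableAt ℝ W x := (hW.differentiable (by simp)) x
  have hCV : DifferentiableAt ℝ (fun p => T2 T p (V p)) x :=
    ((hC.clm_apply hV).differentiable (by simp)) x
  have e0 : (fun p => T p (V p) (W p)) = fun p => T2 T p (V p) (W p) := by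
    funext p; simp
  have e1 : (fun p : Pt n => T p (V x) (W x)) = fun p => T2 T p (V x) (W x) := by
    funext p; simp
  rw [e0, e1]
  rw [fderiv_clm_apply hCV hWd]
  rw [fderiv_clm_apply hCd hVd]
  have hCVc : DifferentiableAt ℝ (fun p => T2 T p (V x)) x :=
    ((hC.clm_apply contDiff_const).differentiable (by simp)) x
  have e2 : fderiv ℝ (fun p => T2 T p (V x) (W x)) x u
      = (fderiv ℝ (T2 T) x u) (V x) (W x) := by
    rw [fderiv_clm_apply hCVc (differentiableAt_const _)]
    rw [fderiv_clm_apply hCd (differentiableAt_const _)]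
    simp
  have e3 : fderiv ℝ (fun p => T2 T p (V p)) x u
      = T2 T x (fderiv ℝ V x u) + (fderiv ℝ (T2 T) x u) (V x) := by
    rw [fderiv_clm_apply hCd hVd]; simp
  simp only [ContinuousLinearMap.add_apply, ContinuousLinearMap.coe_comp',
    Function.comp_apply, ContinuousLinearMap.flip_apply, e2, e3, T2_apply]
  rw [e1, e2]
  abel


lemma euclid_decomp {n : ℕ} (z : Pt n) :
    ∑ i, (inner ℝ z (EuclideanSpace.single i (1:ℝ)) : ℝ) • EuclideanSpace.single i (1:ℝ) = z := by
  ext j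
  have : (∑ i : Fin n, (inner ℝ z (EuclideanSpace.single i (1:ℝ)) : ℝ) • EuclideanSpace.single i (1:ℝ)) j
      = ∑ i : Fin n, (inner ℝ z (EuclideanSpace.single i (1:ℝ)) : ℝ) * (EuclideanSpace.single i (1:ℝ) j) := by
    rw [WithLp.ofLp_sum, Finset.sum_apply]; rfl
  rw [this]
  simp [EuclideanSpace.inner_single_right, EuclideanSpace.single_apply, mul_ite]

variable {n : ℕ}

lemma covVF_contDiff {Γ : Conn n} (hΓsm : ∀ v w : Pt n, ContDiff ℝ (⊤ : ℕ∞) fun x => Γ x v w)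
    {X W : Pt n → Pt n} (hX : ContDiff ℝ (⊤ : ℕ∞) X) (hW : ContDiff ℝ (⊤ : ℕ∞) W) :
    ContDiff ℝ (⊤ : ℕ∞) (covVF Γ X W) := by
  unfold covVF
  exact ((hW.fderiv_right (by simp)).clm_apply hX).add (bilin_contDiff hΓsm hX hW)

lemma tf_fields {Γ : Conn n} (htf : TorsionFree Γ) (X W : Pt n → Pt n) (p : Pt n) :
    covVF Γ X W p - covVF Γ W X p = lieB X W p := by
  simp only [covVF, lieB, htf p (X p) (W p)]
  abel

lemma metcomp {g : Met n} {Γ : Conn n} {α : Pt n → Pt n → ℝ}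
    (hgsm : ∀ v w : Pt n, ContDiff ℝ (⊤ : ℕ∞) fun x => g x v w)
    (hwe : ∀ x u v w, covMet g Γ x u v w = -2 * α x u * g x v w)
    (V W : Pt n → Pt n) (hV : ContDiff ℝ (⊤ : ℕ∞) V) (hW : ContDiff ℝ (⊤ : ℕ∞) W) (x u : Pt n) :
    fderiv ℝ (fun p => g p (V p) (W p)) x u
      = g x (fderiv ℝ V x u + Γ x u (V x)) (W x)
        + g x (V x) (fderiv ℝ W x u + Γ x u (W x))
        - 2 * α x u * g x (V x) (W x) := by
  rw [fderiv_bilin hgsm hV hW x u]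
  have h := hwe x u (V x) (W x)
  unfold covMet at h
  simp only [map_add, LinearMap.add_apply]
  linarith

lemma curv_add1 {Γ : Conn n} (hΓsm : ∀ v w : Pt n, ContDiff ℝ (⊤ : ℕ∞) fun x => Γ x v w)
    (x u₁ u₂ v w : Pt n) :
    curv Γ x (u₁ + u₂) v w = curv Γ x u₁ v w + curv Γ x u₂ v w := by
  have e : (fun p => Γ p (u₁ + u₂) w) = fun p => Γ p u₁ w + Γ p u₂ w := by
    funext p; simp [map_add, LinearMap.add_apply]
  unfold curv
  rw [e, fderiv_fun_add (((hΓsm u₁ w).differentiable (by simp)) x) (((hΓsm u₂ w).differentiable (by simp)) x)]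
  simp only [map_add, LinearMap.add_apply, ContinuousLinearMap.add_apply]
  abel

lemma curv_smul1 {Γ : Conn n} (hΓsm : ∀ v w : Pt n, ContDiff ℝ (⊤ : ℕ∞) fun x => Γ x v w)
    (x : Pt n) (c : ℝ) (u v w : Pt n) :
    curv Γ x (c • u) v w = c • curv Γ x u v w := by
  have e : (fun p => Γ p (c • u) w) = fun p => c • Γ p u w := by
    funext p; simp [map_smul, LinearMap.smul_apply]
  unfold curv
  rw [e, fderiv_fun_const_smul (((hΓsm u w).differentiable (by simp)) x)]
  simp only [map_smul, LinearMap.smul_apply, ContinuousLinearMap.smul_apply,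
    ContinuousLinearMap.map_smul]
  module

lemma curv_vf {Γ : Conn n} (hΓsm : ∀ v w : Pt n, ContDiff ℝ (⊤ : ℕ∞) fun x => Γ x v w)
    {X Z W : Pt n → Pt n} (hX : ContDiff ℝ (⊤ : ℕ∞) X) (hZ : ContDiff ℝ (⊤ : ℕ∞) Z)
    (hW : ContDiff ℝ (⊤ : ℕ∞) W) (p : Pt n) :
    curv Γ p (X p) (Z p) (W p)
      = covVF Γ X (covVF Γ Z W) p - covVF Γ Z (covVF Γ X W) p
        - covVF Γ (lieB X Z) W p := by
  have hdW : Differentiable ℝ W := hW.differentiable (by simp)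
  have hdW2 : ContDiff ℝ (⊤ : ℕ∞) (fderiv ℝ W) := hW.fderiv_right (by simp)
  have hA : ∀ (u : Pt n), fderiv ℝ (fun q => fderiv ℝ W q (Z q)) p u
      = fderiv ℝ W p (fderiv ℝ Z p u) + (fderiv ℝ (fderiv ℝ W) p u) (Z p) := by
    intro u
    rw [fderiv_clm_apply ((hdW2.differentiable (by simp)) p) ((hZ.differentiable (by simp)) p)]
    simp
  have hA' : ∀ (u : Pt n), fderiv ℝ (fun q => fderiv ℝ W q (X q)) p u
      = fderiv ℝ W p (fderiv ℝ X p u) + (fderiv ℝ (fderiv ℝ W) p u) (X p) := by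
    intro u
    rw [fderiv_clm_apply ((hdW2.differentiable (by simp)) p) ((hX.differentiable (by simp)) p)]
    simp
  have hB := fderiv_bilin hΓsm hZ hW p (X p)
  have hB' := fderiv_bilin hΓsm hX hW p (Z p)
  have hd1 : fderiv ℝ (covVF Γ Z W) p (X p)
      = fderiv ℝ (fun q => fderiv ℝ W q (Z q)) p (X p)
        + fderiv ℝ (fun q => Γ q (Z q) (W q)) p (X p) := by
    unfold covVF
    rw [fderiv_fun_add (((hdW2.clm_apply hZ).differentiable (by simp)) p)
      ((bilin_contDiff hΓsm hZ hW).differentiable (by simp) p)]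
    rfl
  have hd2 : fderiv ℝ (covVF Γ X W) p (Z p)
      = fderiv ℝ (fun q => fderiv ℝ W q (X q)) p (Z p)
        + fderiv ℝ (fun q => Γ q (X q) (W q)) p (Z p) := by
    unfold covVF
    rw [fderiv_fun_add (((hdW2.clm_apply hX).differentiable (by simp)) p)
      ((bilin_contDiff hΓsm hX hW).differentiable (by simp) p)]
    rfl
  have hsym : (fderiv ℝ (fderiv ℝ W) p (X p)) (Z p)
      = (fderiv ℝ (fderiv ℝ W) p (Z p)) (X p) :=
    second_derivative_symmetric (fun y => (hdW y).hasFDerivAt)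
      (((hdW2.differentiable (by simp)) p).hasFDerivAt) (X p) (Z p)
  show curv Γ p (X p) (Z p) (W p)
    = (fderiv ℝ (covVF Γ Z W) p (X p) + Γ p (X p) (covVF Γ Z W p))
      - (fderiv ℝ (covVF Γ X W) p (Z p) + Γ p (Z p) (covVF Γ X W p))
      - (fderiv ℝ W p (lieB X Z p) + Γ p (lieB X Z p) (W p))
  rw [hd1, hd2, hA (X p), hA' (Z p), hB, hB']
  unfold curv covVF lieB
  simp only [map_add, map_sub, LinearMap.add_apply, LinearMap.sub_apply,
    ContinuousLinearMap.map_add, ContinuousLinearMap.map_sub]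
  rw [hsym]
  abel

end S18

/-- Ricci identity on a 4-dimensional Weyl space along a foliation `F` by null geodesics
with `F^⊥` integrable: in a frame `{U, Ũ, Y, Ỹ}` with `g = 2(U⊙Ũ + Y⊙Ỹ)`,
`Ric(Y,Y) = 2[Y(g(D_U Ũ, Y)) − g(D_U Ũ, Y)² − g([U,Y],U)·g([Ũ,Y],Ũ)]`. -/
theorem stmt18
    (g : Met 4) (hgs : MetSymm g)
    (hgsm : ∀ v w : Pt 4, ContDiff ℝ (⊤ : ℕ∞) fun x => g x v w)
    (Γ : Conn 4) (α : Pt 4 → Pt 4 → ℝ) (hW : IsWeyl g Γ α)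
    (hΓsm : ∀ v w : Pt 4, ContDiff ℝ (⊤ : ℕ∞) fun x => Γ x v w)
    (U Ut Y Yt : Pt 4 → Pt 4)
    (hU : ContDiff ℝ (⊤ : ℕ∞) U) (hUt : ContDiff ℝ (⊤ : ℕ∞) Ut)
    (hY : ContDiff ℝ (⊤ : ℕ∞) Y) (hYt : ContDiff ℝ (⊤ : ℕ∞) Yt)
    (f1 : ∀ x, g x (U x) (Ut x) = 1) (f2 : ∀ x, g x (Y x) (Yt x) = 1)
    (f3 : ∀ x, g x (U x) (U x) = 0) (f4 : ∀ x, g x (Ut x) (Ut x) = 0)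
    (f5 : ∀ x, g x (Y x) (Y x) = 0) (f6 : ∀ x, g x (Yt x) (Yt x) = 0)
    (f7 : ∀ x, g x (U x) (Y x) = 0) (f8 : ∀ x, g x (U x) (Yt x) = 0)
    (f9 : ∀ x, g x (Ut x) (Y x) = 0) (f10 : ∀ x, g x (Ut x) (Yt x) = 0)
    (hspan : ∀ x u, u = g x u (Ut x) • U x + g x u (U x) • Ut x
      + g x u (Yt x) • Y x + g x u (Y x) • Yt x)
    (hgeo : ∀ x, covVF Γ Y Y x = 0)
    (hint1 : ∀ x, g x (lieB U Ut x) (Y x) = 0)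
    (hint2 : ∀ x, g x (lieB U Y x) (Y x) = 0)
    (hint3 : ∀ x, g x (lieB Ut Y x) (Y x) = 0) :
    ∀ x, ricci Γ x (Y x) (Y x)
      = 2 * (fderiv ℝ (fun p => g p (covVF Γ U Ut p) (Y p)) x (Y x)
          - (g x (covVF Γ U Ut x) (Y x)) ^ 2
          - g x (lieB U Y x) (U x) * g x (lieB Ut Y x) (Ut x)) := by
  obtain ⟨htf, hwe⟩ := hW
  intro x
  have mc := S18.metcomp (g := g) (Γ := Γ) (α := α) hgsm hwe
  -- smoothness of covariant derivative fields
  have hcovUY : ContDiff ℝ (⊤ : ℕ∞) (covVF Γ U Y) := S18.covVF_contDiff hΓsm hU hY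
  have hcovUtY : ContDiff ℝ (⊤ : ℕ∞) (covVF Γ Ut Y) := S18.covVF_contDiff hΓsm hUt hY
  have hcovYtY : ContDiff ℝ (⊤ : ℕ∞) (covVF Γ Yt Y) := S18.covVF_contDiff hΓsm hYt hY
  -- metric compatibility in vector-field form
  have mcf : ∀ (X V W : Pt 4 → Pt 4), ContDiff ℝ (⊤ : ℕ∞) V → ContDiff ℝ (⊤ : ℕ∞) W → ∀ x' : Pt 4,
      fderiv ℝ (fun p => g p (V p) (W p)) x' (X x')
        = g x' (covVF Γ X V x') (W x') + g x' (V x') (covVF Γ X W x')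
          - 2 * α x' (X x') * g x' (V x') (W x') :=
    fun X V W hV hW' x' => mc V W hV hW' x' (X x')
  -- derivative of an orthogonality relation
  have orth : ∀ (V W : Pt 4 → Pt 4), ContDiff ℝ (⊤ : ℕ∞) V → ContDiff ℝ (⊤ : ℕ∞) W →
      (∀ p, g p (V p) (W p) = 0) → ∀ (p u : Pt 4),
      g p (fderiv ℝ V p u + Γ p u (V p)) (W p)
        = -(g p (fderiv ℝ W p u + Γ p u (W p)) (V p)) := by
    intro V W hV hW' h0 p u
    have h := mc V W hV hW' p u
    rw [show (fun q => g q (V q) (W q)) = (fun _ => (0:ℝ)) from funext h0] at h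
    rw [fderiv_fun_const] at h
    simp only [Pi.zero_apply, ContinuousLinearMap.zero_apply, h0 p, mul_zero, sub_zero] at h
    have hs := hgs p (V p) (fderiv ℝ W p u + Γ p u (W p))
    linarith
  -- derivative of a constant pairing equal to 1
  have one' : ∀ (p u : Pt 4), g p (fderiv ℝ U p u + Γ p u (U p)) (Ut p)
      + g p (fderiv ℝ Ut p u + Γ p u (Ut p)) (U p) = 2 * α p u := by
    intro p u
    have h := mc U Ut hU hUt p u
    rw [show (fun q => g q (U q) (Ut q)) = (fun _ => (1:ℝ)) from funext f1] at h
    rw [fderiv_fun_const] at h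
    simp only [Pi.zero_apply, ContinuousLinearMap.zero_apply, f1 p, mul_one] at h
    have hs := hgs p (U p) (fderiv ℝ Ut p u + Γ p u (Ut p))
    linarith
  have P1 : ∀ (p u : Pt 4), g p (fderiv ℝ Y p u + Γ p u (Y p)) (Y p) = 0 := by
    intro p u
    have h := orth Y Y hY hY f5 p u
    linarith
  have P1f : ∀ (X : Pt 4 → Pt 4) (p : Pt 4), g p (covVF Γ X Y p) (Y p) = 0 :=
    fun X p => P1 p (X p)
  have hYUt0 : ∀ p, g p (Y p) (Ut p) = 0 := fun p => by rw [hgs]; exact f9 p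
  have hYU0 : ∀ p, g p (Y p) (U p) = 0 := fun p => by rw [hgs]; exact f7 p
  have P2 : ∀ p, g p (covVF Γ U Y p) (Ut p) = -(g p (covVF Γ U Ut p) (Y p)) :=
    fun p => orth Y Ut hY hUt hYUt0 p (U p)
  have P3 : ∀ p, g p (covVF Γ Ut Y p) (U p) = -(g p (covVF Γ U Ut p) (Y p)) := by
    intro p
    have h : g p (covVF Γ Ut Y p) (U p) = -(g p (covVF Γ Ut U p) (Y p)) :=
      orth Y U hY hU hYU0 p (Ut p)
    have h2 : covVF Γ Ut U p = covVF Γ U Ut p - lieB U Ut p := by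
      rw [← S18.tf_fields htf U Ut p]; abel
    rw [h, h2, map_sub, LinearMap.sub_apply, hint1 p]
    ring
  -- notation
  set a := g x (covVF Γ U Ut x) (Y x) with ha
  set Ya := fderiv ℝ (fun p => g p (covVF Γ U Ut p) (Y p)) x (Y x) with hYa
  set aY := α x (Y x) with haY
  set u1 := g x (lieB U Y x) (Ut x) with hu1
  set u2 := g x (lieB U Y x) (U x) with hu2
  set v1 := g x (lieB Ut Y x) (Ut x) with hv1
  set v2 := g x (lieB Ut Y x) (U x) with hv2
  -- zero components
  have z1 : g x (covVF Γ Y U x) (U x) = 0 := by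
    have h : g x (covVF Γ Y U x) (U x) = -(g x (covVF Γ Y U x) (U x)) :=
      orth U U hU hU f3 x (Y x)
    linarith
  have z2 : g x (covVF Γ Y Ut x) (Ut x) = 0 := by
    have h : g x (covVF Γ Y Ut x) (Ut x) = -(g x (covVF Γ Y Ut x) (Ut x)) :=
      orth Ut Ut hUt hUt f4 x (Y x)
    linarith
  have z3 : g x (covVF Γ Y Ut x) (Y x) = 0 := by
    have h2 : covVF Γ Y Ut x = covVF Γ Ut Y x - lieB Ut Y x := by
      rw [← S18.tf_fields htf Ut Y x]; abel
    rw [h2, map_sub, LinearMap.sub_apply, P1f Ut x, hint3 x]; ring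
  have z4 : g x (covVF Γ Y U x) (Y x) = 0 := by
    have h2 : covVF Γ Y U x = covVF Γ U Y x - lieB U Y x := by
      rw [← S18.tf_fields htf U Y x]; abel
    rw [h2, map_sub, LinearMap.sub_apply, P1f U x, hint2 x]; ring
  have F1 : g x (covVF Γ U Y x) (Ut x) = -a := by rw [P2 x, ← ha]
  have F2 : g x (covVF Γ U Y x) (U x) = u2 := by
    have h2 : covVF Γ U Y x = lieB U Y x + covVF Γ Y U x := by
      rw [← S18.tf_fields htf U Y x]; abel
    rw [h2, map_add, LinearMap.add_apply, z1, ← hu2]; ring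
  have F3 : g x (covVF Γ U Y x) (Y x) = 0 := P1f U x
  have F4 : g x (covVF Γ Ut Y x) (U x) = -a := by rw [P3 x, ← ha]
  have F5 : g x (covVF Γ Ut Y x) (Ut x) = v1 := by
    have h2 : covVF Γ Ut Y x = lieB Ut Y x + covVF Γ Y Ut x := by
      rw [← S18.tf_fields htf Ut Y x]; abel
    rw [h2, map_add, LinearMap.add_apply, z2, ← hv1]; ring
  have F6 : g x (covVF Γ Ut Y x) (Y x) = 0 := P1f Ut x
  -- frame expansion of the metric at x
  have gexp : ∀ q r : Pt 4, g x q r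
      = g x r (Ut x) * g x q (U x) + g x r (U x) * g x q (Ut x)
        + g x r (Yt x) * g x q (Y x) + g x r (Y x) * g x q (Yt x) := by
    intro q r
    conv_lhs => rw [hspan x r]
    simp only [map_add, map_smul, smul_eq_mul]
  -- relations
  have R1 : g x (covVF Γ Y U x) (Ut x) + g x (covVF Γ Y Ut x) (U x) = 2 * aY :=
    one' x (Y x)
  have R2 : g x (covVF Γ Y U x) (Ut x) = -a - u1 := by
    have h2 : covVF Γ Y U x = covVF Γ U Y x - lieB U Y x := by
      rw [← S18.tf_fields htf U Y x]; abel
    rw [h2, map_sub, LinearMap.sub_apply, F1, ← hu1]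
  have R3 : g x (covVF Γ Y Ut x) (U x) = -a - v2 := by
    have h2 : covVF Γ Y Ut x = covVF Γ Ut Y x - lieB Ut Y x := by
      rw [← S18.tf_fields htf Ut Y x]; abel
    rw [h2, map_sub, LinearMap.sub_apply, F4, ← hv2]
  have hsum : u1 + v2 = -2*a - 2*aY := by
    rw [R2, R3] at R1; linarith
  -- products of covariant derivatives
  have gVQ : g x (covVF Γ U Y x) (covVF Γ Y Ut x) = a^2 + a*v2 := by
    rw [gexp (covVF Γ U Y x) (covVF Γ Y Ut x), z2, z3, F1, F2, F3, R3]; ring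
  have gV2P : g x (covVF Γ Ut Y x) (covVF Γ Y U x) = a^2 + a*u1 := by
    rw [gexp (covVF Γ Ut Y x) (covVF Γ Y U x), z1, z4, F4, F5, F6, R2]; ring
  -- covariant derivative along a bracket
  have lieterm : ∀ (L : Pt 4 → Pt 4) (w : Pt 4), g x (L x) (Y x) = 0 →
      g x (covVF Γ L Y x) w
        = g x (L x) (Ut x) * g x (covVF Γ U Y x) w
          + g x (L x) (U x) * g x (covVF Γ Ut Y x) w := by
    intro L w h0
    have hvec : covVF Γ L Y x
        = g x (L x) (Ut x) • covVF Γ U Y x + g x (L x) (U x) • covVF Γ Ut Y x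
          + g x (L x) (Yt x) • covVF Γ Y Y x := by
      have hL := hspan x (L x)
      rw [h0, zero_smul, add_zero] at hL
      show fderiv ℝ Y x (L x) + Γ x (L x) (Y x) = _
      conv_lhs => rw [hL]
      simp only [covVF, map_add, map_smul, LinearMap.add_apply, LinearMap.smul_apply,
        ContinuousLinearMap.map_add, ContinuousLinearMap.map_smul]
      module
    rw [hvec, hgeo x, smul_zero, add_zero]
    simp only [map_add, map_smul, LinearMap.add_apply, LinearMap.smul_apply, smul_eq_mul]
  -- decomposition of the Ricci trace in the null frame
  have curv_lin : ∀ (u v w : Pt 4), curv Γ x u v w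
      = g x u (Ut x) • curv Γ x (U x) v w + g x u (U x) • curv Γ x (Ut x) v w
        + g x u (Yt x) • curv Γ x (Y x) v w + g x u (Y x) • curv Γ x (Yt x) v w := by
    intro u v w
    conv_lhs => rw [hspan x u]
    rw [S18.curv_add1 hΓsm, S18.curv_add1 hΓsm, S18.curv_add1 hΓsm,
      S18.curv_smul1 hΓsm, S18.curv_smul1 hΓsm, S18.curv_smul1 hΓsm, S18.curv_smul1 hΓsm]
  have gsum : ∀ (z w : Pt 4),
      (∑ i, (inner ℝ z (EuclideanSpace.single i (1:ℝ)) : ℝ) * g x (EuclideanSpace.single i 1) w)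
        = g x z w := by
    intro z w
    conv_rhs => rw [← S18.euclid_decomp z]
    rw [map_sum, LinearMap.sum_apply]
    simp only [map_smul, LinearMap.smul_apply, smul_eq_mul]
  have hric : ricci Γ x (Y x) (Y x)
      = g x (curv Γ x (U x) (Y x) (Y x)) (Ut x)
        + g x (curv Γ x (Ut x) (Y x) (Y x)) (U x)
        + g x (curv Γ x (Y x) (Y x) (Y x)) (Yt x)
        + g x (curv Γ x (Yt x) (Y x) (Y x)) (Y x) := by
    unfold ricci
    have step : ∀ i : Fin 4,
        (inner ℝ (curv Γ x (EuclideanSpace.single i 1) (Y x) (Y x)) (EuclideanSpace.single i (1:ℝ)) : ℝ)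
        = (inner ℝ (curv Γ x (U x) (Y x) (Y x)) (EuclideanSpace.single i (1:ℝ)) : ℝ)
            * g x (EuclideanSpace.single i 1) (Ut x)
          + ((inner ℝ (curv Γ x (Ut x) (Y x) (Y x)) (EuclideanSpace.single i (1:ℝ)) : ℝ)
            * g x (EuclideanSpace.single i 1) (U x)
          + ((inner ℝ (curv Γ x (Y x) (Y x) (Y x)) (EuclideanSpace.single i (1:ℝ)) : ℝ)
            * g x (EuclideanSpace.single i 1) (Yt x)
          + (inner ℝ (curv Γ x (Yt x) (Y x) (Y x)) (EuclideanSpace.single i (1:ℝ)) : ℝ)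
            * g x (EuclideanSpace.single i 1) (Y x))) := by
      intro i
      rw [curv_lin (EuclideanSpace.single i 1) (Y x) (Y x)]
      simp only [inner_add_left, real_inner_smul_left]
      ring
    rw [Finset.sum_congr rfl (fun i _ => step i)]
    rw [Finset.sum_add_distrib, Finset.sum_add_distrib, Finset.sum_add_distrib]
    rw [gsum, gsum, gsum, gsum]
    ring
  -- vanishing terms
  have hYY0 : covVF Γ Y Y = fun _ => (0 : Pt 4) := funext hgeo
  have t3 : curv Γ x (Y x) (Y x) (Y x) = 0 := by
    unfold curv; abel
  have t3' : g x (curv Γ x (Y x) (Y x) (Y x)) (Yt x) = 0 := by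
    rw [t3, map_zero, LinearMap.zero_apply]
  have t4 : g x (curv Γ x (Yt x) (Y x) (Y x)) (Y x) = 0 := by
    rw [S18.curv_vf hΓsm hYt hY hY x]
    simp only [map_sub, LinearMap.sub_apply]
    have e0 : covVF Γ Yt (covVF Γ Y Y) x = 0 := by
      rw [hYY0]; simp [covVF, fderiv_const]
    have e1 : g x (covVF Γ Y (covVF Γ Yt Y) x) (Y x) = 0 := by
      have hD0 : ∀ p, g p (covVF Γ Yt Y p) (Y p) = 0 := fun p => P1 p (Yt p)
      have h := mcf Y (covVF Γ Yt Y) Y hcovYtY hY x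
      rw [show (fun p => g p (covVF Γ Yt Y p) (Y p)) = (fun _ => (0:ℝ)) from funext hD0] at h
      rw [fderiv_fun_const] at h
      rw [hgeo x] at h
      simp only [Pi.zero_apply, ContinuousLinearMap.zero_apply, hD0 x, map_zero,
        LinearMap.zero_apply, mul_zero, sub_zero, add_zero] at h
      linarith
    have e2 : g x (covVF Γ (lieB Yt Y) Y x) (Y x) = 0 := P1f (lieB Yt Y) x
    rw [e0, e1, e2, map_zero, LinearMap.zero_apply]
    ring
  -- the two main terms
  have hfun1 : (fun p => g p (covVF Γ U Y p) (Ut p))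
      = fun p => -(g p (covVF Γ U Ut p) (Y p)) := funext P2
  have hfun2 : (fun p => g p (covVF Γ Ut Y p) (U p))
      = fun p => -(g p (covVF Γ U Ut p) (Y p)) := funext P3
  have t1 : g x (curv Γ x (U x) (Y x) (Y x)) (Ut x)
      = Ya + (a^2 + a*v2) + 2*aY*a - (u1 * (-a) + u2 * v1) := by
    rw [S18.curv_vf hΓsm hU hY hY x]
    simp only [map_sub, LinearMap.sub_apply]
    have e0 : covVF Γ U (covVF Γ Y Y) x = 0 := by
      rw [hYY0]; simp [covVF, fderiv_const]
    have e1 : g x (covVF Γ Y (covVF Γ U Y) x) (Ut x)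
        = -Ya - (a^2 + a*v2) - 2*aY*a := by
      have h := mcf Y (covVF Γ U Y) Ut hcovUY hUt x
      rw [hfun1, fderiv_fun_neg, ContinuousLinearMap.neg_apply, ← hYa] at h
      rw [gVQ, F1, ← haY] at h
      linarith
    have e2 : g x (covVF Γ (lieB U Y) Y x) (Ut x) = u1 * (-a) + u2 * v1 := by
      rw [lieterm (lieB U Y) (Ut x) (hint2 x), F1, F5, ← hu1, ← hu2]
    rw [e0, e1, e2, map_zero, LinearMap.zero_apply]
    ring
  have t2 : g x (curv Γ x (Ut x) (Y x) (Y x)) (U x)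
      = Ya + (a^2 + a*u1) + 2*aY*a - (v1 * u2 + v2 * (-a)) := by
    rw [S18.curv_vf hΓsm hUt hY hY x]
    simp only [map_sub, LinearMap.sub_apply]
    have e0 : covVF Γ Ut (covVF Γ Y Y) x = 0 := by
      rw [hYY0]; simp [covVF, fderiv_const]
    have e1 : g x (covVF Γ Y (covVF Γ Ut Y) x) (U x)
        = -Ya - (a^2 + a*u1) - 2*aY*a := by
      have h := mcf Y (covVF Γ Ut Y) U hcovUtY hU x
      rw [hfun2, fderiv_fun_neg, ContinuousLinearMap.neg_apply, ← hYa] at h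
      rw [gV2P, F4, ← haY] at h
      linarith
    have e2 : g x (covVF Γ (lieB Ut Y) Y x) (U x) = v1 * u2 + v2 * (-a) := by
      rw [lieterm (lieB Ut Y) (U x) (hint3 x), F2, F4, ← hv1, ← hv2]
    rw [e0, e1, e2, map_zero, LinearMap.zero_apply]
    ring
  rw [hric, t1, t2, t3', t4]
  linear_combination (2*a) * hsum
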